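/- arXiv:2009.11544 — 4 statements merged into one kernel-verified Lean document; each statement's English description precedes it below -/
import Mathlib

section
/- Let H be a complex Hilbert space, f ∈ H, (g_j)_{j∈ℕ} a pairwise orthogonal family of vectors of H with ∑_{j=0}^∞ ‖g_j‖² ≤ ‖f‖², and (ω_j)_{j∈ℕ} a sequence of real numbers. Then: (i) for every t ≥ 0 the series u(t) := ∑_{j=0}^∞ e^{i ω_j t} g_j converges in H; (ii) for every s ∈ ℂ with Re s > 0 the function t ↦ e^{-s t} u(t) is Bochner integrable on [0,∞), the series ∑_{j=0}^∞ (s − i ω_j)^{-1} g_j converges in H, and ∫_0^∞ e^{-s t} u(t) dt = ∑_{j=0}^∞ (s − i ω_j)^{-1} g_j. (This is the point-spectrum part of the spectral expansion of the Koopman resolvent for ergodic on-attractor evolution, where g_j = P_j f are the orthogonal spectral projections of the observable and i ω_j are the purely imaginary Koopman eigenvalues.) -/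
/-!
Orthogonality gives `‖∑_{j ∈ S} c_j g_j‖² = ∑_{j ∈ S} |c_j|² ‖g_j‖²`, so every bounded coefficient
sequence yields a convergent series. This applies to `e^{i ω_j t}` and to `(s - i ω_j)⁻¹`, which is
bounded by `(Re s)⁻¹`; it also bounds the partial sums of `u` by `(∑ ‖g_j‖²)^{1/2}` uniformly in `t`.
Each term has Laplace transform `(s - i ω_j)⁻¹ g_j`, and dominated convergence, with dominating
function `e^{-(Re s) t} (∑ ‖g_j‖²)^{1/2}`, passes from the partial sums to `u`.
-/

open MeasureTheory Filter Topology Set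
open scoped InnerProductSpace
open Complex (I)

section PairwiseOrthogonal

variable {ι 𝕜 E : Type*} [RCLike 𝕜] [NormedAddCommGroup E] [InnerProductSpace 𝕜 E] {g : ι → E}

theorem orthogonalFamily_span_singleton (hg : Pairwise fun i j => ⟪g i, g j⟫_𝕜 = 0) :
    OrthogonalFamily 𝕜 (fun i => 𝕜 ∙ g i) fun i => (𝕜 ∙ g i).subtypeₗᵢ :=
  OrthogonalFamily.of_pairwise fun _ _ hij => Submodule.isOrtho_span.2 (by simpa using hg hij)

theorem norm_sum_smul_sq_of_pairwise_inner_eq_zero (hg : Pairwise fun i j => ⟪g i, g j⟫_𝕜 = 0)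
    (c : ι → 𝕜) (s : Finset ι) :
    ‖∑ i ∈ s, c i • g i‖ ^ 2 = ∑ i ∈ s, ‖c i‖ ^ 2 * ‖g i‖ ^ 2 := by
  simpa [norm_smul, mul_pow] using (orthogonalFamily_span_singleton hg).norm_sum
    (fun i => ⟨c i • g i, Submodule.smul_mem _ _ (Submodule.mem_span_singleton_self _)⟩) s

theorem norm_sum_smul_sq_le_of_pairwise_inner_eq_zero (hg : Pairwise fun i j => ⟪g i, g j⟫_𝕜 = 0)
    (hsum : Summable fun i => ‖g i‖ ^ 2) {c : ι → 𝕜} {C : ℝ} (hc : ∀ i, ‖c i‖ ≤ C)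
    (s : Finset ι) :
    ‖∑ i ∈ s, c i • g i‖ ^ 2 ≤ C ^ 2 * ∑' i, ‖g i‖ ^ 2 := by
  rw [norm_sum_smul_sq_of_pairwise_inner_eq_zero hg, ← tsum_mul_left]
  calc ∑ i ∈ s, ‖c i‖ ^ 2 * ‖g i‖ ^ 2 ≤ ∑ i ∈ s, C ^ 2 * ‖g i‖ ^ 2 := by
        gcongr with i; exact hc i
    _ ≤ ∑' i, C ^ 2 * ‖g i‖ ^ 2 :=
        (hsum.mul_left _).sum_le_tsum s fun i _ => by positivity

theorem summable_smul_of_pairwise_inner_eq_zero [CompleteSpace E]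
    (hg : Pairwise fun i j => ⟪g i, g j⟫_𝕜 = 0) (hsum : Summable fun i => ‖g i‖ ^ 2)
    {c : ι → 𝕜} {C : ℝ} (hc : ∀ i, ‖c i‖ ≤ C) :
    Summable fun i => c i • g i := by
  refine ((orthogonalFamily_span_singleton hg).summable_iff_norm_sq_summable
    fun i => ⟨c i • g i, Submodule.smul_mem _ _ (Submodule.mem_span_singleton_self _)⟩).2 ?_
  refine (hsum.mul_left (C ^ 2)).of_nonneg_of_le (fun _ => by positivity) fun i => ?_
  simp only [Submodule.coe_norm, norm_smul, mul_pow]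
  gcongr
  exact hc i

end PairwiseOrthogonal

section Laplace

variable {E : Type*} [NormedAddCommGroup E] [NormedSpace ℂ E] {s : ℂ}

theorem norm_cexp_neg_mul_smul_le {x : E} {M : ℝ} (hx : ‖x‖ ≤ M) (t : ℝ) :
    ‖Complex.exp (-s * t) • x‖ ≤ Real.exp (-s.re * t) * M := by
  rw [norm_smul, Complex.norm_exp]
  simp only [neg_mul, Complex.neg_re, Complex.re_mul_ofReal]
  gcongr

theorem integrableOn_cexp_neg_mul_smul_of_norm_le (hs : 0 < s.re) {F : ℝ → E} {M : ℝ}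
    (hF : AEStronglyMeasurable F (volume.restrict (Ioi 0))) (hM : ∀ t, ‖F t‖ ≤ M) :
    IntegrableOn (fun t : ℝ => Complex.exp (-s * t) • F t) (Ioi 0) :=
  ((exp_neg_integrableOn_Ioi 0 hs).mul_const M).mono'
    ((by fun_prop : Continuous fun t : ℝ => Complex.exp (-s * t)).aestronglyMeasurable.smul hF)
    (ae_of_all _ fun t => norm_cexp_neg_mul_smul_le (hM t) t)

theorem tendsto_setIntegral_cexp_neg_mul_smul (hs : 0 < s.re) {F : ℕ → ℝ → E} {u : ℝ → E}
    {M : ℝ} (hF : ∀ n, AEStronglyMeasurable (F n) (volume.restrict (Ioi 0)))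
    (hM : ∀ n t, ‖F n t‖ ≤ M) (hu : ∀ t, Tendsto (F · t) atTop (𝓝 (u t))) :
    Tendsto (fun n => ∫ t in Ioi (0 : ℝ), Complex.exp (-s * t) • F n t) atTop
      (𝓝 (∫ t in Ioi (0 : ℝ), Complex.exp (-s * t) • u t)) :=
  tendsto_integral_of_dominated_convergence (fun t => Real.exp (-s.re * t) * M)
    (fun n => (by fun_prop : Continuous fun t : ℝ => Complex.exp (-s * t)).aestronglyMeasurable.smul
      (hF n))
    ((exp_neg_integrableOn_Ioi 0 hs).mul_const M)
    (fun n => ae_of_all _ fun t => norm_cexp_neg_mul_smul_le (hM n t) t)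
    (ae_of_all _ fun t => (hu t).const_smul _)

theorem integral_cexp_neg_mul_Ioi (hs : 0 < s.re) :
    ∫ t in Ioi (0 : ℝ), Complex.exp (-s * t) = s⁻¹ := by
  simpa using integral_exp_mul_complex_Ioi (a := -s) (by simpa using hs) 0

theorem setIntegral_cexp_neg_mul_smul_sum_cexp_I_mul_smul [CompleteSpace E] (hs : 0 < s.re)
    {ι : Type*} (S : Finset ι) (ω : ι → ℝ) (x : ι → E) :
    ∫ t in Ioi (0 : ℝ), Complex.exp (-s * t) • ∑ j ∈ S, Complex.exp (I * ω j * t) • x j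
      = ∑ j ∈ S, (s - I * ω j)⁻¹ • x j := by
  have hre (j : ι) : 0 < (s - I * ω j).re := by simpa using hs
  have hexp (j : ι) (t : ℝ) : Complex.exp (-s * t) • Complex.exp (I * ω j * t) • x j
      = Complex.exp (-(s - I * ω j) * t) • x j := by
    rw [smul_smul, ← Complex.exp_add]; ring_nf
  simp_rw [Finset.smul_sum, hexp]
  rw [integral_finsetSum _ fun j _ =>
    (integrableOn_exp_mul_complex_Ioi (by simpa using hre j) 0).smul_const (x j)]
  refine Finset.sum_congr rfl fun j _ => ?_
  rw [integral_smul_const, integral_cexp_neg_mul_Ioi (hre j)]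

end Laplace

theorem koopman_resolvent_on_attractor_point_spectrum_general
    {H : Type*} [NormedAddCommGroup H] [InnerProductSpace ℂ H] [CompleteSpace H]
    (g : ℕ → H) (ω : ℕ → ℝ)
    (horth : Pairwise fun j k => ⟪g j, g k⟫_ℂ = 0)
    (hsum : Summable fun j => ‖g j‖ ^ 2) :
    (∀ t : ℝ, 0 ≤ t →
      Summable fun j => Complex.exp (Complex.I * (ω j) * t) • g j) ∧
    ∀ s : ℂ, 0 < s.re →
      IntegrableOn
        (fun t : ℝ =>
          Complex.exp (-s * t) • ∑' j, Complex.exp (Complex.I * (ω j) * t) • g j)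
        (Set.Ioi 0) ∧
      (Summable fun j => (s - Complex.I * (ω j))⁻¹ • g j) ∧
      ∫ t in Set.Ioi (0 : ℝ),
          Complex.exp (-s * t) • ∑' j, Complex.exp (Complex.I * (ω j) * t) • g j
        = ∑' j, (s - Complex.I * (ω j))⁻¹ • g j := by
  have hexp_I (t : ℝ) (j : ℕ) : ‖Complex.exp (I * ω j * t)‖ ≤ 1 := by
    simp [Complex.norm_exp]
  have hresolvent (s : ℂ) (hs : 0 < s.re) (j : ℕ) : ‖(s - I * ω j)⁻¹‖ ≤ s.re⁻¹ := by
    rw [norm_inv]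
    exact inv_anti₀ hs (by simpa using Complex.re_le_norm (s - I * ω j))
  refine ⟨fun t _ => summable_smul_of_pairwise_inner_eq_zero horth hsum (hexp_I t), fun s hs => ?_⟩
  set u := fun t : ℝ => ∑' j, Complex.exp (I * ω j * t) • g j
  set P := fun (n : ℕ) (t : ℝ) => ∑ j ∈ Finset.range n, Complex.exp (I * ω j * t) • g j
  have hP_meas (n : ℕ) : AEStronglyMeasurable (P n) (volume.restrict (Ioi 0)) :=
    (by fun_prop : Continuous (P n)).aestronglyMeasurable
  have hP_le (n : ℕ) (t : ℝ) : ‖P n t‖ ≤ √(∑' j, ‖g j‖ ^ 2) := Real.le_sqrt_of_sq_le <| by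
    simpa using norm_sum_smul_sq_le_of_pairwise_inner_eq_zero horth hsum (hexp_I t) (Finset.range n)
  have hP_tendsto (t : ℝ) : Tendsto (P · t) atTop (𝓝 (u t)) :=
    (summable_smul_of_pairwise_inner_eq_zero horth hsum (hexp_I t)).hasSum.tendsto_sum_nat
  have hu_meas := aestronglyMeasurable_of_tendsto_ae atTop hP_meas (ae_of_all _ hP_tendsto)
  have hu_le (t : ℝ) : ‖u t‖ ≤ √(∑' j, ‖g j‖ ^ 2) := le_of_tendsto' (hP_tendsto t).norm (hP_le · t)
  have hsummable := summable_smul_of_pairwise_inner_eq_zero horth hsum (hresolvent s hs)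
  refine ⟨integrableOn_cexp_neg_mul_smul_of_norm_le hs hu_meas hu_le, hsummable,
    tendsto_nhds_unique (tendsto_setIntegral_cexp_neg_mul_smul hs hP_meas hP_le hP_tendsto) ?_⟩
  simp_rw [P, setIntegral_cexp_neg_mul_smul_sum_cexp_I_mul_smul hs]
  exact hsummable.hasSum.tendsto_sum_nat

/-- Point-spectrum part of the spectral expansion of the Koopman resolvent for
ergodic on-attractor evolution: `g j = P j f` are the orthogonal spectral
projections of the observable `f` and `i ω j` the purely imaginary Koopman
eigenvalues. -/
theorem koopman_resolvent_on_attractor_point_spectrum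
    {H : Type*} [NormedAddCommGroup H] [InnerProductSpace ℂ H] [CompleteSpace H]
    (f : H) (g : ℕ → H) (ω : ℕ → ℝ)
    (horth : Pairwise fun j k => ⟪g j, g k⟫_ℂ = 0)
    (hsum : Summable fun j => ‖g j‖ ^ 2)
    (hbound : ∑' j, ‖g j‖ ^ 2 ≤ ‖f‖ ^ 2) :
    (∀ t : ℝ, 0 ≤ t →
      Summable fun j => Complex.exp (Complex.I * (ω j) * t) • g j) ∧
    ∀ s : ℂ, 0 < s.re →
      IntegrableOn
        (fun t : ℝ =>
          Complex.exp (-s * t) • ∑' j, Complex.exp (Complex.I * (ω j) * t) • g j)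
        (Set.Ioi 0) ∧
      (Summable fun j => (s - Complex.I * (ω j))⁻¹ • g j) ∧
      ∫ t in Set.Ioi (0 : ℝ),
          Complex.exp (-s * t) • ∑' j, Complex.exp (Complex.I * (ω j) * t) • g j
        = ∑' j, (s - Complex.I * (ω j))⁻¹ • g j :=
  koopman_resolvent_on_attractor_point_spectrum_general g ω horth hsum
end

section
/- Let H be a complex Hilbert space, n ≥ 2, ν : Fin (n−1) → ℂ with Re ν_i < 0 for all i, and Ω > 0 a real number. Let g : ((Fin (n−1) → ℕ) × ℤ) → H, indexed by pairs (k, m) of a multi-index k and an integer m, be a pairwise orthogonal family with ∑_{(k,m)} ‖g_{k,m}‖² < ∞. Set Λ(k, m) := (∑_i k_i ν_i) + i m Ω. Then: (i) for every t ≥ 0 the series u(t) := ∑_{(k,m)} e^{Λ(k,m) t} g_{k,m} converges in H; (ii) for every s ∈ ℂ with Re s > 0 the function t ↦ e^{-s t} u(t) is Bochner integrable on [0,∞), the series ∑_{(k,m)} (s − Λ(k,m))^{-1} g_{k,m} converges in H, and ∫_0^∞ e^{-s t} u(t) dt = ∑_{(k,m)} (s − Λ(k,m))^{-1} g_{k,m}.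 (This is the spectral expansion of the Koopman resolvent for dynamics converging to a stable limit cycle with angular frequency Ω and characteristic exponents ν_1,…,ν_{n−1}, where g_{k,m} = P_{k,m} f are the orthogonal spectral projections of the observable in the averaging kernel Hilbert space.) -/
/-!
All exponents `Λ p = ∑ kᵢ νᵢ + i m Ω` have `Re Λ p ≤ 0`. For a pairwise orthogonal family with
`∑ ‖g p‖² < ∞`, Pythagoras bounds every finite partial sum of `∑ c p • g p` with `‖c p‖ ≤ C` by
`C (∑ ‖g p‖²)^{1/2}`, and such series converge. So `u t` is defined for `t ≥ 0`, and the partial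
sums of `e^{-st} u(t)` are dominated by the integrable `e^{-Re s · t} (∑ ‖g p‖²)^{1/2}`. Since
`∫₀^∞ e^{(Λ - s) t} dt = (s - Λ)⁻¹`, dominated convergence along the (countably generated) filter of
finite sets of indices turns the integral into the resolvent series.
-/

open MeasureTheory Filter Topology
open scoped InnerProductSpace

section OrthogonalSeries

variable {ι H : Type*} [NormedAddCommGroup H] [InnerProductSpace ℂ H] {g : ι → H}

theorem orthogonalFamily_span_singleton_s3 (horth : Pairwise fun p q => ⟪g p, g q⟫_ℂ = 0) :
    OrthogonalFamily ℂ (fun p => (ℂ ∙ g p : Submodule ℂ H)) fun p => (ℂ ∙ g p).subtypeₗᵢ := by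
  intro p q hpq v w
  obtain ⟨a, ha⟩ := Submodule.mem_span_singleton.1 v.2
  obtain ⟨b, hb⟩ := Submodule.mem_span_singleton.1 w.2
  change ⟪(v : H), (w : H)⟫_ℂ = 0
  rw [← ha, ← hb, inner_smul_left, inner_smul_right, horth hpq, mul_zero, mul_zero]

def smulSpanSingleton (g : ι → H) (c : ι → ℂ) (p : ι) : (ℂ ∙ g p : Submodule ℂ H) :=
  ⟨c p • g p, Submodule.smul_mem _ _ (Submodule.mem_span_singleton_self _)⟩

theorem norm_sum_smul_sq (horth : Pairwise fun p q => ⟪g p, g q⟫_ℂ = 0) (c : ι → ℂ)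
    (s : Finset ι) : ‖∑ p ∈ s, c p • g p‖ ^ 2 = ∑ p ∈ s, ‖c p • g p‖ ^ 2 :=
  (orthogonalFamily_span_singleton_s3 horth).norm_sum (smulSpanSingleton g c) s

theorem summable_smul_of_summable_norm_sq [CompleteSpace H]
    (horth : Pairwise fun p q => ⟪g p, g q⟫_ℂ = 0) {c : ι → ℂ}
    (h : Summable fun p => ‖c p • g p‖ ^ 2) : Summable fun p => c p • g p :=
  ((orthogonalFamily_span_singleton_s3 horth).summable_iff_norm_sq_summable
    (smulSpanSingleton g c)).2 h

theorem summable_smul_of_norm_le [CompleteSpace H]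
    (horth : Pairwise fun p q => ⟪g p, g q⟫_ℂ = 0) (hsum : Summable fun p => ‖g p‖ ^ 2)
    {c : ι → ℂ} {C : ℝ} (hc : ∀ p, ‖c p‖ ≤ C) : Summable fun p => c p • g p := by
  refine summable_smul_of_summable_norm_sq horth <|
    (hsum.mul_left (C ^ 2)).of_nonneg_of_le (fun p => sq_nonneg _) fun p => ?_
  rw [norm_smul, mul_pow]
  gcongr
  exact hc p

theorem norm_sum_smul_le (horth : Pairwise fun p q => ⟪g p, g q⟫_ℂ = 0)
    (hsum : Summable fun p => ‖g p‖ ^ 2) {c : ι → ℂ} {C : ℝ} (hC : 0 ≤ C)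
    (hc : ∀ p, ‖c p‖ ≤ C) (s : Finset ι) :
    ‖∑ p ∈ s, c p • g p‖ ≤ C * √(∑' p, ‖g p‖ ^ 2) := by
  rw [← Real.sqrt_sq hC, ← Real.sqrt_mul (sq_nonneg C), Real.le_sqrt (norm_nonneg _)
    (mul_nonneg (sq_nonneg C) (tsum_nonneg fun p => sq_nonneg _)), norm_sum_smul_sq horth]
  calc ∑ p ∈ s, ‖c p • g p‖ ^ 2 ≤ ∑ p ∈ s, C ^ 2 * ‖g p‖ ^ 2 := by
        gcongr with p
        rw [norm_smul, mul_pow]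
        gcongr
        exact hc p
    _ ≤ C ^ 2 * ∑' p, ‖g p‖ ^ 2 := by
        rw [← Finset.mul_sum]
        gcongr
        exact hsum.sum_le_tsum s fun p _ => sq_nonneg _

end OrthogonalSeries

section LaplaceTransform

theorem norm_cexp_mul_ofReal_le_one {z : ℂ} (hz : z.re ≤ 0) {t : ℝ} (ht : 0 ≤ t) :
    ‖Complex.exp (z * t)‖ ≤ 1 := by
  rw [Complex.norm_exp, Complex.re_mul_ofReal, Real.exp_le_one_iff]
  exact mul_nonpos_of_nonpos_of_nonneg hz ht

theorem integral_cexp_mul_Ioi_zero {a : ℂ} (ha : a.re < 0) :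
    ∫ t in Set.Ioi (0 : ℝ), Complex.exp (a * t) = (-a)⁻¹ := by
  rw [integral_exp_mul_complex_Ioi ha, Complex.ofReal_zero, mul_zero, Complex.exp_zero,
    neg_div, ← div_neg, one_div]

variable {ι H : Type*} [NormedAddCommGroup H] [InnerProductSpace ℂ H]
  {Λ : ι → ℂ} {g : ι → H} {s : ℂ}

theorem integral_cexp_smul_sum [CompleteSpace H] (hΛ : ∀ p, (Λ p).re ≤ 0) (hs : 0 < s.re)
    (S : Finset ι) :
    ∫ t in Set.Ioi (0 : ℝ), Complex.exp (-s * t) • ∑ p ∈ S, Complex.exp (Λ p * t) • g p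
      = ∑ p ∈ S, (s - Λ p)⁻¹ • g p := by
  have hre : ∀ p, (Λ p - s).re < 0 := fun p => by rw [Complex.sub_re]; linarith [hΛ p]
  simp_rw [Finset.smul_sum, smul_smul, ← Complex.exp_add, ← add_mul, neg_add_eq_sub]
  rw [integral_finsetSum _ fun p _ => (integrableOn_exp_mul_complex_Ioi (hre p) 0).smul_const _]
  refine Finset.sum_congr rfl fun p _ => ?_
  rw [integral_smul_const, integral_cexp_mul_Ioi_zero (hre p), neg_sub]

theorem norm_cexp_smul_sum_le (hΛ : ∀ p, (Λ p).re ≤ 0)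
    (horth : Pairwise fun p q => ⟪g p, g q⟫_ℂ = 0) (hsum : Summable fun p => ‖g p‖ ^ 2)
    {t : ℝ} (ht : 0 ≤ t) (S : Finset ι) :
    ‖Complex.exp (-s * t) • ∑ p ∈ S, Complex.exp (Λ p * t) • g p‖
      ≤ Real.exp (-s.re * t) * √(∑' p, ‖g p‖ ^ 2) := by
  rw [norm_smul, Complex.norm_exp, Complex.re_mul_ofReal, Complex.neg_re]
  gcongr
  simpa using norm_sum_smul_le horth hsum zero_le_one
    (fun p => norm_cexp_mul_ofReal_le_one (hΛ p) ht) S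

end LaplaceTransform

section KoopmanResolvent

variable {ι H : Type*} [NormedAddCommGroup H] [InnerProductSpace ℂ H] [CompleteSpace H]
  {Λ : ι → ℂ} {g : ι → H}

theorem summable_cexp_mul_smul (hΛ : ∀ p, (Λ p).re ≤ 0)
    (horth : Pairwise fun p q => ⟪g p, g q⟫_ℂ = 0) (hsum : Summable fun p => ‖g p‖ ^ 2)
    {t : ℝ} (ht : 0 ≤ t) : Summable fun p => Complex.exp (Λ p * t) • g p :=
  summable_smul_of_norm_le horth hsum fun p => norm_cexp_mul_ofReal_le_one (hΛ p) ht

theorem integrableOn_and_hasSum_laplace_tsum_cexp_mul_smul [Countable ι]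
    (hΛ : ∀ p, (Λ p).re ≤ 0) (horth : Pairwise fun p q => ⟪g p, g q⟫_ℂ = 0)
    (hsum : Summable fun p => ‖g p‖ ^ 2) {s : ℂ} (hs : 0 < s.re) :
    IntegrableOn (fun t : ℝ => Complex.exp (-s * t) • ∑' p, Complex.exp (Λ p * t) • g p)
        (Set.Ioi 0) ∧
      HasSum (fun p => (s - Λ p)⁻¹ • g p)
        (∫ t in Set.Ioi (0 : ℝ), Complex.exp (-s * t) • ∑' p, Complex.exp (Λ p * t) • g p) := by
  set μ := volume.restrict (Set.Ioi (0 : ℝ))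
  set F : Finset ι → ℝ → H :=
    fun S t => Complex.exp (-s * t) • ∑ p ∈ S, Complex.exp (Λ p * t) • g p
  set bound : ℝ → ℝ := fun t => Real.exp (-s.re * t) * √(∑' p, ‖g p‖ ^ 2)
  have hF_meas : ∀ S, AEStronglyMeasurable (F S) μ := fun S => by
    refine Continuous.aestronglyMeasurable ?_
    fun_prop
  have hF_le : ∀ S, ∀ᵐ t ∂μ, ‖F S t‖ ≤ bound t := fun S =>
    (ae_restrict_iff' measurableSet_Ioi).2 <| .of_forall fun t ht =>
      norm_cexp_smul_sum_le hΛ horth hsum (le_of_lt ht) S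
  have h_bound : Integrable bound μ :=
    (integrableOn_exp_mul_Ioi (neg_lt_zero.2 hs) 0).mul_const _
  have h_lim : ∀ᵐ t ∂μ, Tendsto (fun S => F S t) atTop
      (𝓝 (Complex.exp (-s * t) • ∑' p, Complex.exp (Λ p * t) • g p)) :=
    (ae_restrict_iff' measurableSet_Ioi).2 <| .of_forall fun t ht =>
      Tendsto.const_smul (summable_cexp_mul_smul hΛ horth hsum (le_of_lt ht)).hasSum _
  refine ⟨Integrable.mono' h_bound (aestronglyMeasurable_of_tendsto_ae _ hF_meas h_lim) ?_, ?_⟩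
  · filter_upwards [ae_all_iff.2 hF_le, h_lim] with t hle hlim
    exact le_of_tendsto hlim.norm (.of_forall hle)
  · exact (tendsto_integral_filter_of_dominated_convergence bound (.of_forall hF_meas)
      (.of_forall hF_le) h_bound h_lim).congr (integral_cexp_smul_sum hΛ hs)

end KoopmanResolvent

theorem re_sum_natCast_mul_add_I_mul_le_zero {m : ℕ} {ν : Fin m → ℂ} (hν : ∀ i, (ν i).re ≤ 0)
    (k : Fin m → ℕ) (j : ℤ) (Ω : ℝ) : ((∑ i, (k i : ℂ) * ν i) + Complex.I * j * Ω).re ≤ 0 := by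
  simpa [Complex.re_sum] using
    Finset.sum_nonpos fun i _ => mul_nonpos_of_nonneg_of_nonpos (k i).cast_nonneg (hν i)

theorem koopman_resolvent_stable_limit_cycle_general
    {H : Type*} [NormedAddCommGroup H] [InnerProductSpace ℂ H] [CompleteSpace H]
    (n : ℕ) (ν : Fin (n - 1) → ℂ) (hν : ∀ i, (ν i).re < 0)
    (Ω : ℝ)
    (g : (Fin (n - 1) → ℕ) × ℤ → H)
    (horth : Pairwise fun p q => ⟪g p, g q⟫_ℂ = 0)
    (hsum : Summable fun p => ‖g p‖ ^ 2) :
    (∀ t : ℝ, 0 ≤ t →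
      Summable fun p : (Fin (n - 1) → ℕ) × ℤ =>
        Complex.exp (((∑ i, (p.1 i : ℂ) * ν i) + Complex.I * p.2 * Ω) * t) • g p) ∧
    ∀ s : ℂ, 0 < s.re →
      IntegrableOn
        (fun t : ℝ =>
          Complex.exp (-s * t) •
            ∑' p : (Fin (n - 1) → ℕ) × ℤ,
              Complex.exp (((∑ i, (p.1 i : ℂ) * ν i) + Complex.I * p.2 * Ω) * t) • g p)
        (Set.Ioi 0) ∧
      (Summable fun p : (Fin (n - 1) → ℕ) × ℤ =>
        (s - ((∑ i, (p.1 i : ℂ) * ν i) + Complex.I * p.2 * Ω))⁻¹ • g p) ∧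
      ∫ t in Set.Ioi (0 : ℝ),
          Complex.exp (-s * t) •
            ∑' p : (Fin (n - 1) → ℕ) × ℤ,
              Complex.exp (((∑ i, (p.1 i : ℂ) * ν i) + Complex.I * p.2 * Ω) * t) • g p
        = ∑' p : (Fin (n - 1) → ℕ) × ℤ,
            (s - ((∑ i, (p.1 i : ℂ) * ν i) + Complex.I * p.2 * Ω))⁻¹ • g p := by
  have hΛ (p : (Fin (n - 1) → ℕ) × ℤ) :
      ((∑ i, (p.1 i : ℂ) * ν i) + Complex.I * p.2 * Ω).re ≤ 0 :=
    re_sum_natCast_mul_add_I_mul_le_zero (fun i => (hν i).le) p.1 p.2 Ω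
  refine ⟨fun t ht => summable_cexp_mul_smul hΛ horth hsum ht, fun s hs => ?_⟩
  obtain ⟨hint, hres⟩ := integrableOn_and_hasSum_laplace_tsum_cexp_mul_smul hΛ horth hsum hs
  exact ⟨hint, hres.summable, hres.tsum_eq.symm⟩

/-- Spectral expansion of the Koopman resolvent for dynamics converging to a
stable limit cycle with angular frequency `Ω` and characteristic exponents
`ν 0, …, ν (n-2)` (all with negative real parts); `g (k, m) = P (k, m) f` are
the orthogonal spectral projections of the observable in the averaging kernel
Hilbert space, indexed by a multi-index `k : Fin (n-1) → ℕ` and `m : ℤ`. -/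
theorem koopman_resolvent_stable_limit_cycle
    {H : Type*} [NormedAddCommGroup H] [InnerProductSpace ℂ H] [CompleteSpace H]
    (n : ℕ) (hn : 2 ≤ n) (ν : Fin (n - 1) → ℂ) (hν : ∀ i, (ν i).re < 0)
    (Ω : ℝ) (hΩ : 0 < Ω)
    (g : (Fin (n - 1) → ℕ) × ℤ → H)
    (horth : Pairwise fun p q => ⟪g p, g q⟫_ℂ = 0)
    (hsum : Summable fun p => ‖g p‖ ^ 2) :
    (∀ t : ℝ, 0 ≤ t →
      Summable fun p : (Fin (n - 1) → ℕ) × ℤ =>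
        Complex.exp (((∑ i, (p.1 i : ℂ) * ν i) + Complex.I * p.2 * Ω) * t) • g p) ∧
    ∀ s : ℂ, 0 < s.re →
      IntegrableOn
        (fun t : ℝ =>
          Complex.exp (-s * t) •
            ∑' p : (Fin (n - 1) → ℕ) × ℤ,
              Complex.exp (((∑ i, (p.1 i : ℂ) * ν i) + Complex.I * p.2 * Ω) * t) • g p)
        (Set.Ioi 0) ∧
      (Summable fun p : (Fin (n - 1) → ℕ) × ℤ =>
        (s - ((∑ i, (p.1 i : ℂ) * ν i) + Complex.I * p.2 * Ω))⁻¹ • g p) ∧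
      ∫ t in Set.Ioi (0 : ℝ),
          Complex.exp (-s * t) •
            ∑' p : (Fin (n - 1) → ℕ) × ℤ,
              Complex.exp (((∑ i, (p.1 i : ℂ) * ν i) + Complex.I * p.2 * Ω) * t) • g p
        = ∑' p : (Fin (n - 1) → ℕ) × ℤ,
            (s - ((∑ i, (p.1 i : ℂ) * ν i) + Complex.I * p.2 * Ω))⁻¹ • g p :=
  koopman_resolvent_stable_limit_cycle_general n ν hν Ω g horth hsum
end

section
/- Let A be an n × n complex matrix with vectors v_1, …, v_n, w_1, …, w_n ∈ ℂ^n and scalars λ_1, …, λ_n ∈ ℂ such that A v_j = λ_j v_j, w_jᵀ A = λ_j w_jᵀ, w_jᵀ v_k = δ_{jk}, and (v_1, …, v_n) is a basis of ℂ^n. Let c, x_0 ∈ ℂ^n and let s ∈ ℂ satisfy Re s > max_j Re λ_j. Then the function t ↦ e^{-s t} cᵀ (exp(t A) x_0) is integrable on [0,∞) and ∫_0^∞ e^{-s t} cᵀ (exp(t A) x_0) dt = ∑_{j=1}^n (w_jᵀ x_0)(cᵀ v_j) / (s − λ_j). (The unilateral Laplace transform of the output of a diagonalizable linear system has the partial-fraction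 form whose poles are the principal Koopman eigenvalues λ_j and whose residues are φ_j(x_0) V_j = (w_jᵀ x_0)(cᵀ v_j).) -/
open Matrix MeasureTheory

/-!
Since `wⱼᵀ vₖ = δⱼₖ` for square families, the matrices with rows `wⱼ` and columns `vⱼ` are
mutually inverse, so `x₀ = ∑ⱼ (wⱼᵀ x₀) vⱼ`. Each `vⱼ` is an eigenvector of `exp(tA)` with
eigenvalue `e^{t λⱼ}`, hence `e^{-st} cᵀ exp(tA) x₀ = ∑ⱼ (wⱼᵀ x₀)(cᵀ vⱼ) e^{(λⱼ - s) t}`, and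
each term has Laplace integral `1 / (s - λⱼ)` because `Re (λⱼ - s) < 0`.
-/

namespace Matrix

variable {m : Type*} [Fintype m] [DecidableEq m]

theorem sum_dotProduct_smul_eq_self_of_biorthogonal {R : Type*} [CommRing R] {v w : m → m → R}
    (hbi : ∀ j k, w j ⬝ᵥ v k = if j = k then 1 else 0) (x : m → R) :
    ∑ j, (w j ⬝ᵥ x) • v j = x := by
  have hWV : of w * (of v)ᵀ = 1 := by
    ext j k
    simpa [mul_apply, one_apply, dotProduct] using hbi j k
  calc ∑ j, (w j ⬝ᵥ x) • v j = (of v)ᵀ *ᵥ (of w *ᵥ x) := by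
        ext i
        simp [mulVec, dotProduct, Finset.sum_apply, mul_comm]
    _ = x := by rw [mulVec_mulVec, mul_eq_one_comm.mp hWV, one_mulVec]

theorem pow_mulVec_of_mulVec_eq_smul {R : Type*} [CommRing R] {A : Matrix m m R} {v : m → R}
    {μ : R} (h : A *ᵥ v = μ • v) (k : ℕ) : (A ^ k) *ᵥ v = μ ^ k • v := by
  induction k with
  | zero => simp
  | succ k ih => rw [pow_succ, ← mulVec_mulVec, h, mulVec_smul, ih, smul_smul, pow_succ']

section

attribute [local instance] Matrix.linftyOpNormedRing Matrix.linftyOpNormedAlgebra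

theorem exp_mulVec_of_mulVec_eq_smul {𝕂 : Type*} [RCLike 𝕂] {A : Matrix m m 𝕂} {v : m → 𝕂}
    {μ : 𝕂} (h : A *ᵥ v = μ • v) : NormedSpace.exp A *ᵥ v = NormedSpace.exp μ • v := by
  have hA := (NormedSpace.exp_series_hasSum_exp' (𝕂 := 𝕂) A).map
    (mulVec.addMonoidHomLeft v) (continuous_id.matrix_mulVec continuous_const)
  have hμ := (NormedSpace.exp_series_hasSum_exp' (𝕂 := 𝕂) μ).smul_const v
  refine hA.unique (hμ.congr_fun fun k => ?_)
  change ((k.factorial : 𝕂)⁻¹ • A ^ k) *ᵥ v = _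
  rw [smul_mulVec, pow_mulVec_of_mulVec_eq_smul h, smul_smul, smul_eq_mul]

end

theorem dotProduct_exp_smul_mulVec_eq_sum {𝕂 : Type*} [RCLike 𝕂] {A : Matrix m m 𝕂}
    {v w : m → m → 𝕂} {lam : m → 𝕂} (hv : ∀ j, A *ᵥ v j = lam j • v j)
    (hbi : ∀ j k, w j ⬝ᵥ v k = if j = k then 1 else 0) (c x : m → 𝕂) (t : 𝕂) :
    c ⬝ᵥ (NormedSpace.exp (t • A) *ᵥ x)
      = ∑ j, (w j ⬝ᵥ x) * (c ⬝ᵥ v j) * NormedSpace.exp (t * lam j) := by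
  have htA : ∀ j, (t • A) *ᵥ v j = (t * lam j) • v j := fun j => by
    rw [smul_mulVec, hv, smul_smul]
  conv_lhs => rw [← sum_dotProduct_smul_eq_self_of_biorthogonal hbi x]
  simp only [mulVec_sum, mulVec_smul, exp_mulVec_of_mulVec_eq_smul (htA _), dotProduct_sum,
    dotProduct_smul, smul_eq_mul]
  exact Finset.sum_congr rfl fun j _ => by ring

end Matrix

theorem linear_system_laplace_transform_partial_fractions_general
    {n : ℕ} (A : Matrix (Fin n) (Fin n) ℂ)
    (v w : Fin n → Fin n → ℂ) (lam : Fin n → ℂ)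
    (hv : ∀ j, A *ᵥ v j = lam j • v j)
    (hbi : ∀ j k, w j ⬝ᵥ v k = if j = k then 1 else 0)
    (c x₀ : Fin n → ℂ) (s : ℂ) (hs : ∀ j, (lam j).re < s.re) :
    IntegrableOn
      (fun t : ℝ =>
        Complex.exp (-s * t) * (c ⬝ᵥ (NormedSpace.exp ((t : ℂ) • A) *ᵥ x₀)))
      (Set.Ioi 0) ∧
    ∫ t in Set.Ioi (0 : ℝ),
        Complex.exp (-s * t) * (c ⬝ᵥ (NormedSpace.exp ((t : ℂ) • A) *ᵥ x₀))
      = ∑ j, (w j ⬝ᵥ x₀) * (c ⬝ᵥ v j) / (s - lam j) := by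
  have hre : ∀ j, (lam j - s).re < 0 := fun j => by simpa using hs j
  have hsum : (fun t : ℝ => Complex.exp (-s * t) * (c ⬝ᵥ (NormedSpace.exp ((t : ℂ) • A) *ᵥ x₀)))
      = fun t : ℝ => ∑ j, (w j ⬝ᵥ x₀) * (c ⬝ᵥ v j) * Complex.exp ((lam j - s) * t) := by
    ext t
    rw [dotProduct_exp_smul_mulVec_eq_sum hv hbi, Finset.mul_sum]
    refine Finset.sum_congr rfl fun j _ => ?_
    rw [← Complex.exp_eq_exp_ℂ, show (lam j - s) * t = -s * t + t * lam j by ring,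
      Complex.exp_add]
    ring
  have hterm : ∀ j, IntegrableOn
      (fun t : ℝ => (w j ⬝ᵥ x₀) * (c ⬝ᵥ v j) * Complex.exp ((lam j - s) * t)) (Set.Ioi 0) :=
    fun j => (integrableOn_exp_mul_complex_Ioi (hre j) 0).const_mul _
  rw [hsum]
  refine ⟨integrable_finsetSum _ fun j _ => hterm j, ?_⟩
  rw [integral_finsetSum _ fun j _ => hterm j]
  refine Finset.sum_congr rfl fun j _ => ?_
  rw [integral_const_mul, integral_exp_mul_complex_Ioi (hre j)]
  simp [div_eq_mul_inv, ← inv_neg]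

/-- The unilateral Laplace transform of the output of a diagonalizable linear
system has the partial-fraction form whose poles are the principal Koopman
eigenvalues `λⱼ` and whose residues are `φⱼ(x₀) Vⱼ = (wⱼᵀ x₀)(cᵀ vⱼ)`, valid
for `Re s > maxⱼ Re λⱼ`. -/
theorem linear_system_laplace_transform_partial_fractions
    {n : ℕ} (A : Matrix (Fin n) (Fin n) ℂ)
    (v w : Fin n → Fin n → ℂ) (lam : Fin n → ℂ)
    (hv : ∀ j, A *ᵥ v j = lam j • v j)
    (hw : ∀ j, w j ᵥ* A = lam j • w j)
    (hbi : ∀ j k, w j ⬝ᵥ v k = if j = k then 1 else 0)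
    (hindep : LinearIndependent ℂ v)
    (hspan : Submodule.span ℂ (Set.range v) = ⊤)
    (c x₀ : Fin n → ℂ) (s : ℂ) (hs : ∀ j, (lam j).re < s.re) :
    IntegrableOn
      (fun t : ℝ =>
        Complex.exp (-s * t) * (c ⬝ᵥ (NormedSpace.exp ((t : ℂ) • A) *ᵥ x₀)))
      (Set.Ioi 0) ∧
    ∫ t in Set.Ioi (0 : ℝ),
        Complex.exp (-s * t) * (c ⬝ᵥ (NormedSpace.exp ((t : ℂ) • A) *ᵥ x₀))
      = ∑ j, (w j ⬝ᵥ x₀) * (c ⬝ᵥ v j) / (s - lam j) :=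
  linear_system_laplace_transform_partial_fractions_general A v w lam hv hbi c x₀ s hs
end

section
/- Let 𝒜 be a complex unital Banach algebra, a ∈ 𝒜, and s ∈ ℂ with Re s > ‖a‖. Then s·1 − a is invertible in 𝒜, the 𝒜-valued function t ↦ e^{-s t} exp(t a) is Bochner integrable on [0,∞), and (s·1 − a)^{-1} = ∫_0^∞ e^{-s t} exp(t a) dt. (Integral representation of the resolvent of a bounded generator: the resolvent is the Laplace transform of the semigroup exp(t a).) -/
/-!
Writing `b = s • 1 - a`, the integrand is the semigroup `exp (t • -b)`, whose derivative is
`-b * exp (t • -b) = exp (t • -b) * -b`. Since `‖exp (t • a)‖ ≤ ‖1‖ e^{t ‖a‖}`, the semigroup is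
integrable on `(0, ∞)` when `‖a‖ < Re s`, hence so is its derivative, and it tends to `0` at `∞`.
The fundamental theorem of calculus on `(0, ∞)` then gives `b * ∫ exp (t • -b) = 1` and
`(∫ exp (t • -b)) * b = 1`.
-/

open NormedSpace MeasureTheory Filter Set
open scoped Topology Nat

theorem norm_pow_le_norm_one_mul {𝔸 : Type*} [NormedRing 𝔸] (x : 𝔸) (n : ℕ) :
    ‖x ^ n‖ ≤ ‖(1 : 𝔸)‖ * ‖x‖ ^ n := by
  rcases n.eq_zero_or_pos with rfl | hn
  · simp
  · calc ‖x ^ n‖ = ‖1 * x ^ n‖ := by rw [one_mul]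
      _ ≤ ‖(1 : 𝔸)‖ * ‖x ^ n‖ := norm_mul_le _ _
      _ ≤ ‖(1 : 𝔸)‖ * ‖x‖ ^ n := by gcongr; exact norm_pow_le' x hn

theorem NormedSpace.norm_exp_le_norm_one_mul_exp_norm (𝕂 : Type*) {𝔸 : Type*} [RCLike 𝕂]
    [NormedRing 𝔸] [NormedAlgebra 𝕂 𝔸] (x : 𝔸) :
    ‖exp x‖ ≤ ‖(1 : 𝔸)‖ * Real.exp ‖x‖ := by
  have hexp : HasSum (fun n : ℕ => ‖(1 : 𝔸)‖ * (‖x‖ ^ n / n !)) (‖(1 : 𝔸)‖ * Real.exp ‖x‖) := by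
    rw [Real.exp_eq_exp_ℝ]
    exact (expSeries_div_hasSum_exp ‖x‖).mul_left _
  rw [exp_eq_tsum 𝕂]
  refine tsum_of_norm_bounded hexp fun n => ?_
  rw [norm_smul, norm_inv, RCLike.norm_natCast]
  calc (n ! : ℝ)⁻¹ * ‖x ^ n‖ ≤ (n ! : ℝ)⁻¹ * (‖(1 : 𝔸)‖ * ‖x‖ ^ n) := by
        gcongr; exact norm_pow_le_norm_one_mul x n
    _ = ‖(1 : 𝔸)‖ * (‖x‖ ^ n / n !) := by ring

section Semigroup

variable {𝔸 : Type*} [NormedRing 𝔸] [NormedAlgebra ℝ 𝔸] [CompleteSpace 𝔸] {b : 𝔸}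

theorem tendsto_exp_smul_neg_atTop (hb : IntegrableOn (fun t : ℝ => exp (t • -b)) (Ioi 0)) :
    Tendsto (fun t : ℝ => exp (t • -b)) atTop (𝓝 0) :=
  tendsto_zero_of_hasDerivAt_of_integrableOn_Ioi (fun t _ => hasDerivAt_exp_smul_const (-b) t)
    (hb.mul_const (-b)) hb

theorem mul_integral_exp_smul_neg_eq_one
    (hb : IntegrableOn (fun t : ℝ => exp (t • -b)) (Ioi 0)) :
    b * ∫ t in Ioi (0 : ℝ), exp (t • -b) = 1 := by
  have hftc := integral_Ioi_of_hasDerivAt_of_tendsto'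
    (fun t _ => hasDerivAt_exp_smul_const' (-b) t) (hb.const_mul (-b))
    (tendsto_exp_smul_neg_atTop hb)
  rw [integral_const_mul_of_integrable hb, zero_smul, exp_zero, zero_sub, neg_mul] at hftc
  exact neg_injective hftc

theorem integral_exp_smul_neg_mul_eq_one
    (hb : IntegrableOn (fun t : ℝ => exp (t • -b)) (Ioi 0)) :
    (∫ t in Ioi (0 : ℝ), exp (t • -b)) * b = 1 := by
  have hftc := integral_Ioi_of_hasDerivAt_of_tendsto'
    (fun t _ => hasDerivAt_exp_smul_const (-b) t) (hb.mul_const (-b))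
    (tendsto_exp_smul_neg_atTop hb)
  rw [integral_mul_const_of_integrable hb, zero_smul, exp_zero, zero_sub, mul_neg] at hftc
  exact neg_injective hftc

end Semigroup

section ComplexScalars

variable {𝔸 : Type*} [NormedRing 𝔸] [NormedAlgebra ℂ 𝔸]

theorem cexp_smul_exp_eq_exp_add [CompleteSpace 𝔸] (z : ℂ) (x : 𝔸) :
    Complex.exp z • exp x = exp (z • 1 + x) := by
  let +nondep : NormedAlgebra ℚ 𝔸 := .restrictScalars ℚ ℂ 𝔸
  rw [exp_add_of_commute ((Commute.one_left x).smul_left z), ← Algebra.algebraMap_eq_smul_one,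
    ← algebraMap_exp_comm, Complex.exp_eq_exp_ℂ, Algebra.smul_def]

theorem norm_cexp_neg_mul_smul_exp_smul_le (a : 𝔸) (s : ℂ) {t : ℝ} (ht : 0 ≤ t) :
    ‖Complex.exp (-s * t) • exp (t • a)‖ ≤ ‖(1 : 𝔸)‖ * Real.exp (-(s.re - ‖a‖) * t) := by
  have hexp := norm_exp_le_norm_one_mul_exp_norm ℂ (t • a)
  rw [norm_smul, Real.norm_of_nonneg ht] at hexp
  calc ‖Complex.exp (-s * t) • exp (t • a)‖
      = Real.exp (-s.re * t) * ‖exp (t • a)‖ := by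
        rw [norm_smul, Complex.norm_exp]; simp [Complex.mul_re]
    _ ≤ Real.exp (-s.re * t) * (‖(1 : 𝔸)‖ * Real.exp (t * ‖a‖)) := by gcongr
    _ = ‖(1 : 𝔸)‖ * Real.exp (-(s.re - ‖a‖) * t) := by
        rw [mul_left_comm, ← Real.exp_add]; ring_nf

theorem integrableOn_cexp_neg_mul_smul_exp_smul [CompleteSpace 𝔸] (a : 𝔸) {s : ℂ}
    (hs : ‖a‖ < s.re) :
    IntegrableOn (fun t : ℝ => Complex.exp (-s * t) • exp (t • a)) (Ioi 0) := by
  have hcont : Continuous fun t : ℝ => Complex.exp (-s * t) • exp (t • a) := by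
    let +nondep : NormedAlgebra ℚ 𝔸 := .restrictScalars ℚ ℂ 𝔸
    fun_prop
  refine Integrable.mono' ((exp_neg_integrableOn_Ioi 0 (sub_pos.2 hs)).const_mul ‖(1 : 𝔸)‖)
    hcont.aestronglyMeasurable.restrict ?_
  filter_upwards [ae_restrict_mem measurableSet_Ioi] with t ht
  exact norm_cexp_neg_mul_smul_exp_smul_le a s ht.le

end ComplexScalars

/-- Integral representation of the resolvent of a bounded generator: for an
element `a` of a complex unital Banach algebra and `Re s > ‖a‖`, the element
`s • 1 - a` is invertible and its inverse is the Laplace transform of the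
semigroup `t ↦ exp(t a)`. -/
theorem resolvent_eq_laplace_transform_of_semigroup
    {𝒜 : Type*} [NormedRing 𝒜] [NormedAlgebra ℂ 𝒜] [CompleteSpace 𝒜]
    (a : 𝒜) (s : ℂ) (hs : ‖a‖ < s.re) :
    IsUnit (s • (1 : 𝒜) - a) ∧
    IntegrableOn
      (fun t : ℝ => Complex.exp (-s * t) • NormedSpace.exp ((t : ℝ) • a))
      (Set.Ioi 0) ∧
    Ring.inverse (s • (1 : 𝒜) - a)
      = ∫ t in Set.Ioi (0 : ℝ), Complex.exp (-s * t) • NormedSpace.exp ((t : ℝ) • a) := by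
  have hsemigroup : (fun t : ℝ => Complex.exp (-s * t) • exp (t • a))
      = fun t : ℝ => exp (t • -(s • (1 : 𝒜) - a)) := by
    ext t
    rw [cexp_smul_exp_eq_exp_add]
    congr 1
    simp only [neg_sub, smul_sub, ← Complex.coe_smul, smul_smul]
    module
  have hint := integrableOn_cexp_neg_mul_smul_exp_smul a hs
  rw [hsemigroup] at hint ⊢
  let u : 𝒜ˣ :=
    ⟨_, _, mul_integral_exp_smul_neg_eq_one hint, integral_exp_smul_neg_mul_eq_one hint⟩
  exact ⟨u.isUnit, hint, Ring.inverse_unit u⟩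
end
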